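/- arXiv:2203.05472 — 3 statements merged into one kernel-verified Lean document; each statement's English description precedes it below -/
import Mathlib

section
/- Let h ∈ (0,1) and let ψ : ℝ → ℝ be continuously differentiable with |ψ(x)| ≤ C₀(1+|x|)^{−4} and |ψ'(x)| ≤ C₀(1+|x|)^{−4} for some C₀ > 0 and all x ∈ ℝ. Then there exists C > 0 such that for all s, t ∈ ℝ, ∑_{j=0}^{∞} ∑_{k∈ℤ} 2^{−2hj}·(ψ(2^j t − k) − ψ(2^j s − k))² ≤ C·|s−t|^{2h}. (This double sum equals the variance E[(f_h(t)−f_h(s))²] of the Gaussian random wavelet series f_h with coefficients ξ_{j,k} 2^{−hj}.) -/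
/-!
At scale `j` the inner sum is `S (2 ^ j * t) (2 ^ j * s)` with
`S a b = ∑ₖ (ψ (a - k) - ψ (b - k)) ^ 2`. Comparing `1 + |x - k|` with `1 + |⌊x⌋ - k|` makes the
lattice sums of `(1 + |x - k|)⁻⁸` bounded uniformly in `x`; hence the decay of `ψ` bounds `S`
uniformly, and the mean value theorem with the decay of `ψ'` gives `S a b ≲ (a - b) ^ 2` when
`|a - b| ≤ 1`. Splitting the sum over `j` at the first scale where `2 ^ j * |s - t| ≥ 1`, the
small scales form a geometric series of ratio `2 ^ (2h - 2)` and the large scales one of ratio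
`2 ^ (-2h)`, both summing to `O(|s - t| ^ (2h))`.
-/

open Real Set Finset

lemma one_add_abs_pow_inv_le {x y : ℝ} (hxy : |x - y| ≤ 1) (n : ℕ) :
    ((1 + |x|) ^ n)⁻¹ ≤ 2 ^ n * ((1 + |y|) ^ n)⁻¹ := by
  have hy : 1 + |y| ≤ 2 * (1 + |x|) := by
    have := abs_sub_abs_le_abs_sub y x
    rw [abs_sub_comm] at this
    linarith [abs_nonneg x]
  rw [← inv_pow, ← inv_pow, ← mul_pow]
  gcongr
  rw [← div_eq_mul_inv, inv_eq_one_div, div_le_div_iff₀ (by positivity) (by positivity)]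
  linarith

lemma summable_one_add_abs_int_pow_inv {n : ℕ} (hn : 2 ≤ n) :
    Summable fun k : ℤ ↦ ((1 + |(k : ℝ)|) ^ n)⁻¹ := by
  have hnat : Summable fun k : ℕ ↦ (((k : ℝ) + 1) ^ n)⁻¹ := by
    simpa using (summable_nat_add_iff 1).mpr (Real.summable_nat_pow_inv.mpr hn)
  refine .of_nat_of_neg ?_ ?_ <;> simpa [add_comm] using hnat

lemma one_add_abs_sub_int_pow_inv_le_floor (n : ℕ) (x : ℝ) (k : ℤ) :
    ((1 + |x - k|) ^ n)⁻¹ ≤ 2 ^ n * ((1 + |((⌊x⌋ - k : ℤ) : ℝ)|) ^ n)⁻¹ := by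
  refine one_add_abs_pow_inv_le ?_ n
  rw [Int.cast_sub, sub_sub_sub_cancel_right, abs_le]
  constructor <;> linarith [Int.floor_le x, Int.lt_floor_add_one x]

lemma summable_one_add_abs_sub_int_pow_inv {n : ℕ} (hn : 2 ≤ n) (x : ℝ) :
    Summable fun k : ℤ ↦ ((1 + |x - k|) ^ n)⁻¹ :=
  .of_nonneg_of_le (fun _ ↦ by positivity) (one_add_abs_sub_int_pow_inv_le_floor n x)
    (((summable_one_add_abs_int_pow_inv hn).comp_injective
      (Equiv.subLeft ⌊x⌋).injective).mul_left _)

lemma tsum_one_add_abs_sub_int_pow_inv_le {n : ℕ} (hn : 2 ≤ n) (x : ℝ) :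
    ∑' k : ℤ, ((1 + |x - k|) ^ n)⁻¹ ≤ 2 ^ n * ∑' k : ℤ, ((1 + |(k : ℝ)|) ^ n)⁻¹ := by
  have hshift := (summable_one_add_abs_int_pow_inv hn).comp_injective
    (Equiv.subLeft ⌊x⌋).injective
  calc ∑' k : ℤ, ((1 + |x - k|) ^ n)⁻¹
      ≤ ∑' k : ℤ, 2 ^ n * ((1 + |((⌊x⌋ - k : ℤ) : ℝ)|) ^ n)⁻¹ :=
        (summable_one_add_abs_sub_int_pow_inv hn x).tsum_le_tsum
          (one_add_abs_sub_int_pow_inv_le_floor n x) (hshift.mul_left _)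
    _ = 2 ^ n * ∑' k : ℤ, ((1 + |(k : ℝ)|) ^ n)⁻¹ := by
        rw [tsum_mul_left]
        congr 1
        exact (Equiv.subLeft ⌊x⌋).tsum_eq fun k : ℤ ↦ ((1 + |(k : ℝ)|) ^ n)⁻¹

section LatticeSums

variable {ψ : ℝ → ℝ} {C : ℝ} {n : ℕ}

lemma sq_le_of_abs_le_mul_pow_inv {x : ℝ} (hψ : |ψ x| ≤ C * ((1 + |x|) ^ n)⁻¹) :
    ψ x ^ 2 ≤ C ^ 2 * ((1 + |x|) ^ (2 * n))⁻¹ := by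
  calc ψ x ^ 2 = |ψ x| ^ 2 := (sq_abs _).symm
    _ ≤ (C * ((1 + |x|) ^ n)⁻¹) ^ 2 := pow_le_pow_left₀ (abs_nonneg _) hψ 2
    _ = C ^ 2 * ((1 + |x|) ^ (2 * n))⁻¹ := by rw [mul_pow, inv_pow, ← pow_mul, mul_comm n]

lemma tsum_sq_sub_translate_le (hn : 1 ≤ n) (hψ : ∀ x, |ψ x| ≤ C * ((1 + |x|) ^ n)⁻¹)
    (a b : ℝ) :
    ∑' k : ℤ, (ψ (a - k) - ψ (b - k)) ^ 2 ≤
      4 * 2 ^ (2 * n) * C ^ 2 * ∑' k : ℤ, ((1 + |(k : ℝ)|) ^ (2 * n))⁻¹ := by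
  have h2n : 2 ≤ 2 * n := by omega
  have hterm : ∀ k : ℤ, (ψ (a - k) - ψ (b - k)) ^ 2 ≤
      2 * C ^ 2 * (((1 + |a - k|) ^ (2 * n))⁻¹ + ((1 + |b - k|) ^ (2 * n))⁻¹) := fun k ↦ by
    nlinarith [sq_le_of_abs_le_mul_pow_inv (hψ (a - k)), sq_le_of_abs_le_mul_pow_inv (hψ (b - k)),
      sq_nonneg (ψ (a - k) + ψ (b - k))]
  have hmaj := ((summable_one_add_abs_sub_int_pow_inv h2n a).add
    (summable_one_add_abs_sub_int_pow_inv h2n b)).mul_left (2 * C ^ 2)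
  calc ∑' k : ℤ, (ψ (a - k) - ψ (b - k)) ^ 2
      ≤ ∑' k : ℤ, 2 * C ^ 2 * (((1 + |a - k|) ^ (2 * n))⁻¹ + ((1 + |b - k|) ^ (2 * n))⁻¹) :=
        (hmaj.of_nonneg_of_le (fun _ ↦ sq_nonneg _) hterm).tsum_le_tsum hterm hmaj
    _ = 2 * C ^ 2 * (∑' k : ℤ, ((1 + |a - k|) ^ (2 * n))⁻¹ +
          ∑' k : ℤ, ((1 + |b - k|) ^ (2 * n))⁻¹) := by
        rw [tsum_mul_left, (summable_one_add_abs_sub_int_pow_inv h2n a).tsum_add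
          (summable_one_add_abs_sub_int_pow_inv h2n b)]
    _ ≤ 2 * C ^ 2 * (2 ^ (2 * n) * ∑' k : ℤ, ((1 + |(k : ℝ)|) ^ (2 * n))⁻¹ +
          2 ^ (2 * n) * ∑' k : ℤ, ((1 + |(k : ℝ)|) ^ (2 * n))⁻¹) := by
        gcongr <;> exact tsum_one_add_abs_sub_int_pow_inv_le h2n _
    _ = 4 * 2 ^ (2 * n) * C ^ 2 * ∑' k : ℤ, ((1 + |(k : ℝ)|) ^ (2 * n))⁻¹ := by ring

lemma abs_sub_le_of_abs_deriv_le (hd : Differentiable ℝ ψ)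
    (hψ' : ∀ x, |deriv ψ x| ≤ C * ((1 + |x|) ^ n)⁻¹) {a b : ℝ} (hab : |a - b| ≤ 1) :
    |ψ a - ψ b| ≤ 2 ^ n * C * ((1 + |a|) ^ n)⁻¹ * |a - b| := by
  have hC : 0 ≤ C := nonneg_of_mul_nonneg_left ((abs_nonneg _).trans (hψ' 0)) (by positivity)
  have hbound : ∀ x ∈ uIcc b a, ‖deriv ψ x‖ ≤ 2 ^ n * C * ((1 + |a|) ^ n)⁻¹ := by
    intro x hx
    have hxa : |x - a| ≤ 1 :=
      (abs_sub_le_of_uIcc_subset_uIcc (uIcc_subset_uIcc right_mem_uIcc hx)).trans hab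
    calc ‖deriv ψ x‖ ≤ C * ((1 + |x|) ^ n)⁻¹ := hψ' x
      _ ≤ C * (2 ^ n * ((1 + |a|) ^ n)⁻¹) := by gcongr; exact one_add_abs_pow_inv_le hxa n
      _ = 2 ^ n * C * ((1 + |a|) ^ n)⁻¹ := by ring
  simpa using (convex_uIcc b a).norm_image_sub_le_of_norm_deriv_le
    (fun x _ ↦ hd x) hbound left_mem_uIcc right_mem_uIcc

lemma tsum_sq_sub_translate_le_sq (hn : 1 ≤ n) (hd : Differentiable ℝ ψ)
    (hψ' : ∀ x, |deriv ψ x| ≤ C * ((1 + |x|) ^ n)⁻¹) {a b : ℝ} (hab : |a - b| ≤ 1) :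
    ∑' k : ℤ, (ψ (a - k) - ψ (b - k)) ^ 2 ≤
      2 ^ (4 * n) * C ^ 2 * (∑' k : ℤ, ((1 + |(k : ℝ)|) ^ (2 * n))⁻¹) * (a - b) ^ 2 := by
  have h2n : 2 ≤ 2 * n := by omega
  have hterm : ∀ k : ℤ, (ψ (a - k) - ψ (b - k)) ^ 2 ≤
      2 ^ (2 * n) * C ^ 2 * (a - b) ^ 2 * ((1 + |a - k|) ^ (2 * n))⁻¹ := fun k ↦ by
    have hk : |(a - k) - (b - k)| ≤ 1 := by rwa [sub_sub_sub_cancel_right]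
    have := pow_le_pow_left₀ (abs_nonneg _) (abs_sub_le_of_abs_deriv_le hd hψ' hk) 2
    rw [sq_abs, sub_sub_sub_cancel_right] at this
    refine this.trans_eq ?_
    rw [mul_pow, mul_pow, mul_pow, sq_abs, inv_pow, ← pow_mul, ← pow_mul]
    ring
  have hmaj := (summable_one_add_abs_sub_int_pow_inv h2n a).mul_left
    (2 ^ (2 * n) * C ^ 2 * (a - b) ^ 2)
  calc ∑' k : ℤ, (ψ (a - k) - ψ (b - k)) ^ 2
      ≤ ∑' k : ℤ, 2 ^ (2 * n) * C ^ 2 * (a - b) ^ 2 * ((1 + |a - k|) ^ (2 * n))⁻¹ :=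
        (hmaj.of_nonneg_of_le (fun _ ↦ sq_nonneg _) hterm).tsum_le_tsum hterm hmaj
    _ ≤ 2 ^ (2 * n) * C ^ 2 * (a - b) ^ 2 *
          (2 ^ (2 * n) * ∑' k : ℤ, ((1 + |(k : ℝ)|) ^ (2 * n))⁻¹) := by
        rw [tsum_mul_left]
        gcongr
        exact tsum_one_add_abs_sub_int_pow_inv_le h2n a
    _ = 2 ^ (4 * n) * C ^ 2 * (∑' k : ℤ, ((1 + |(k : ℝ)|) ^ (2 * n))⁻¹) * (a - b) ^ 2 := by
        ring

end LatticeSums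

section Dyadic

lemma two_rpow_neg_mul_natCast (α : ℝ) (j : ℕ) : (2 : ℝ) ^ (-(α * j)) = ((2 : ℝ) ^ j) ^ (-α) := by
  rw [← rpow_natCast_mul zero_le_two]
  ring_nf

lemma two_pow_rpow_neg (β : ℝ) (m : ℕ) : ((2 : ℝ) ^ m) ^ (-β) = ((2 : ℝ) ^ (-β)) ^ m := by
  rw [← two_rpow_neg_mul_natCast, ← rpow_mul_natCast zero_le_two]
  ring_nf

variable {α δ K₁ K₂ : ℝ} {I : ℕ → ℝ}

lemma two_rpow_neg_mul_natCast_eq (hδ : 0 < δ) (j : ℕ) :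
    (2 : ℝ) ^ (-(α * j)) = δ ^ α * (2 ^ j * δ) ^ (-α) := by
  rw [two_rpow_neg_mul_natCast, mul_rpow (by positivity) hδ.le, rpow_neg hδ.le, mul_left_comm,
    mul_inv_cancel₀ (rpow_pos_of_pos hδ α).ne', mul_one]

lemma rpow_le_two_rpow_neg_pow {y β : ℝ} (hy : 0 ≤ y) (hβ : 0 ≤ β) {m : ℕ}
    (hym : y * 2 ^ m ≤ 1) : y ^ β ≤ ((2 : ℝ) ^ (-β)) ^ m := by
  rw [← two_pow_rpow_neg, rpow_neg (by positivity), ← inv_rpow (by positivity)]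
  refine rpow_le_rpow hy ?_ hβ
  rwa [← one_div, le_div_iff₀ (by positivity)]

lemma rpow_neg_le_two_rpow_neg_pow {y β : ℝ} (hβ : 0 ≤ β) {m : ℕ} (hym : 2 ^ m ≤ y) :
    y ^ (-β) ≤ ((2 : ℝ) ^ (-β)) ^ m := by
  rw [← two_pow_rpow_neg]
  exact rpow_le_rpow_of_nonpos (by positivity) hym (by linarith)

lemma sum_range_two_rpow_neg_mul_le (hα : α < 2) (hδ : 0 < δ) (hK₂ : 0 ≤ K₂) {N : ℕ}
    (hN : ∀ j < N, (2 : ℝ) ^ j * δ ≤ 1) (hI : ∀ j < N, I j ≤ K₂ * (2 ^ j * δ) ^ 2) :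
    ∑ j ∈ range N, (2 : ℝ) ^ (-(α * j)) * I j ≤ K₂ * (1 - 2 ^ (α - 2))⁻¹ * δ ^ α := by
  set ρ : ℝ := 2 ^ (α - 2)
  have hρ : ρ < 1 := rpow_lt_one_of_one_lt_of_neg one_lt_two (by linarith)
  have hterm : ∀ j ∈ range N, (2 : ℝ) ^ (-(α * j)) * I j ≤ K₂ * δ ^ α * ρ ^ (N - 1 - j) := by
    intro j hj
    have hj := mem_range.1 hj
    have hy : 2 ^ j * δ * 2 ^ (N - 1 - j) ≤ 1 := by
      rw [mul_right_comm, ← pow_add, show j + (N - 1 - j) = N - 1 by omega]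
      exact hN _ (by omega)
    calc (2 : ℝ) ^ (-(α * j)) * I j ≤ (2 : ℝ) ^ (-(α * j)) * (K₂ * (2 ^ j * δ) ^ 2) := by
          gcongr; exact hI j hj
      _ = K₂ * δ ^ α * (2 ^ j * δ) ^ (2 - α) := by
          rw [two_rpow_neg_mul_natCast_eq hδ, show 2 - α = -α + 2 by ring,
            rpow_add (by positivity), rpow_two]
          ring
      _ ≤ K₂ * δ ^ α * ρ ^ (N - 1 - j) := by
          gcongr
          simpa [ρ] using rpow_le_two_rpow_neg_pow (by positivity) (by linarith : 0 ≤ 2 - α) hy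
  calc ∑ j ∈ range N, (2 : ℝ) ^ (-(α * j)) * I j
      ≤ ∑ j ∈ range N, K₂ * δ ^ α * ρ ^ (N - 1 - j) := sum_le_sum hterm
    _ = K₂ * δ ^ α * ∑ i ∈ range N, ρ ^ i := by
        rw [← mul_sum, sum_range_reflect (ρ ^ ·)]
    _ ≤ K₂ * δ ^ α * (1 - ρ)⁻¹ := by
        refine mul_le_mul_of_nonneg_left ?_ (by positivity)
        have := geom_sum_Ico_le_of_lt_one (m := 0) (n := N) (by positivity : 0 ≤ ρ) hρ
        rwa [← range_eq_Ico, pow_zero, one_div] at this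
    _ = K₂ * (1 - ρ)⁻¹ * δ ^ α := by ring

lemma tsum_two_rpow_neg_mul_nat_add_le (hα : 0 < α) (hδ : 0 < δ) {N : ℕ}
    (hN : 1 ≤ 2 ^ N * δ) (hI₀ : ∀ j, 0 ≤ I j) (hI : ∀ j, I j ≤ K₁) :
    ∑' i : ℕ, (2 : ℝ) ^ (-(α * ↑(i + N))) * I (i + N) ≤ K₁ * (1 - 2 ^ (-α))⁻¹ * δ ^ α := by
  set r : ℝ := 2 ^ (-α)
  have hr : r < 1 := rpow_lt_one_of_one_lt_of_neg one_lt_two (by linarith)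
  have hK₁ : 0 ≤ K₁ := (hI₀ 0).trans (hI 0)
  have hterm : ∀ i : ℕ, (2 : ℝ) ^ (-(α * ↑(i + N))) * I (i + N) ≤ K₁ * δ ^ α * r ^ i := by
    intro i
    have hy : (2 : ℝ) ^ i ≤ 2 ^ (i + N) * δ := by
      rw [pow_add, mul_assoc]
      exact le_mul_of_one_le_right (by positivity) hN
    calc (2 : ℝ) ^ (-(α * ↑(i + N))) * I (i + N) ≤ (2 : ℝ) ^ (-(α * ↑(i + N))) * K₁ := by
          gcongr; exact hI _
      _ = K₁ * δ ^ α * (2 ^ (i + N) * δ) ^ (-α) := by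
          rw [two_rpow_neg_mul_natCast_eq hδ]; ring
      _ ≤ K₁ * δ ^ α * r ^ i := by
          gcongr; exact rpow_neg_le_two_rpow_neg_pow hα.le hy
  have hgeom := (summable_geometric_of_lt_one (by positivity) hr).mul_left (K₁ * δ ^ α)
  calc ∑' i : ℕ, (2 : ℝ) ^ (-(α * ↑(i + N))) * I (i + N)
      ≤ ∑' i : ℕ, K₁ * δ ^ α * r ^ i :=
        (hgeom.of_nonneg_of_le (fun i ↦ mul_nonneg (by positivity) (hI₀ _)) hterm).tsum_le_tsum
          hterm hgeom
    _ = K₁ * (1 - r)⁻¹ * δ ^ α := by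
        rw [tsum_mul_left, tsum_geometric_of_lt_one (by positivity) hr]; ring

theorem tsum_two_rpow_neg_mul_le (hα₀ : 0 < α) (hα₂ : α < 2) (hδ : 0 ≤ δ) (hK₂ : 0 ≤ K₂)
    (hI₀ : ∀ j, 0 ≤ I j) (hI₁ : ∀ j, I j ≤ K₁)
    (hI₂ : ∀ j : ℕ, 2 ^ j * δ ≤ 1 → I j ≤ K₂ * (2 ^ j * δ) ^ 2) :
    ∑' j : ℕ, (2 : ℝ) ^ (-(α * j)) * I j ≤
      (K₁ * (1 - 2 ^ (-α))⁻¹ + K₂ * (1 - 2 ^ (α - 2))⁻¹) * δ ^ α := by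
  rcases hδ.eq_or_lt with rfl | hδ
  · rw [zero_rpow hα₀.ne', mul_zero]
    refine tsum_nonpos fun j ↦ mul_nonpos_of_nonneg_of_nonpos (by positivity) ?_
    simpa using hI₂ j (by simp)
  have hsum : Summable fun j : ℕ ↦ (2 : ℝ) ^ (-(α * j)) * I j := by
    refine ((summable_geometric_of_lt_one (by positivity)
      (rpow_lt_one_of_one_lt_of_neg one_lt_two (neg_neg_of_pos hα₀))).mul_left K₁).of_nonneg_of_le
      (fun j ↦ mul_nonneg (by positivity) (hI₀ j)) fun j ↦ ?_
    rw [two_rpow_neg_mul_natCast, two_pow_rpow_neg, mul_comm K₁]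
    exact mul_le_mul_of_nonneg_left (hI₁ j) (by positivity)
  have hscale : ∃ N : ℕ, 1 ≤ (2 : ℝ) ^ N * δ := by
    obtain ⟨N, hN⟩ := pow_unbounded_of_one_lt δ⁻¹ one_lt_two
    exact ⟨N, (div_le_iff₀ hδ).1 ((one_div δ).trans_le hN.le)⟩
  have hfirst : ∀ j < Nat.find hscale, (2 : ℝ) ^ j * δ ≤ 1 :=
    fun j hj ↦ (not_le.1 (Nat.find_min hscale hj)).le
  rw [← hsum.sum_add_tsum_nat_add (Nat.find hscale)]
  refine (add_le_add
    (sum_range_two_rpow_neg_mul_le hα₂ hδ hK₂ hfirst fun j hj ↦ hI₂ j (hfirst j hj))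
    (tsum_two_rpow_neg_mul_nat_add_le hα₀ hδ (Nat.find_spec hscale) hI₀ hI₁)).trans_eq ?_
  ring

end Dyadic

theorem stmt_5 (h : ℝ) (hh : h ∈ Set.Ioo (0 : ℝ) 1) (ψ : ℝ → ℝ) (hψ : ContDiff ℝ 1 ψ)
    (C₀ : ℝ) (hC₀ : 0 < C₀)
    (hdecay : ∀ x : ℝ, |ψ x| ≤ C₀ * (1 + |x|) ^ (-4 : ℤ) ∧
      |deriv ψ x| ≤ C₀ * (1 + |x|) ^ (-4 : ℤ)) :
    ∃ C : ℝ, 0 < C ∧ ∀ s t : ℝ,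
      (∑' j : ℕ, ∑' k : ℤ, (2 : ℝ) ^ (-(2 * h * (j : ℝ))) *
        (ψ ((2 : ℝ) ^ j * t - (k : ℝ)) - ψ ((2 : ℝ) ^ j * s - (k : ℝ))) ^ 2)
        ≤ C * |s - t| ^ (2 * h) := by
  obtain ⟨hh₀, hh₁⟩ := hh
  have hψ₀ : ∀ x, |ψ x| ≤ C₀ * ((1 + |x|) ^ 4)⁻¹ := fun x ↦ by simpa using (hdecay x).1
  have hψ₁ : ∀ x, |deriv ψ x| ≤ C₀ * ((1 + |x|) ^ 4)⁻¹ := fun x ↦ by simpa using (hdecay x).2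
  set B := ∑' k : ℤ, ((1 + |(k : ℝ)|) ^ (2 * 4))⁻¹
  have hB : 0 < B := (summable_one_add_abs_int_pow_inv (by norm_num)).tsum_pos
    (fun _ ↦ by positivity) 0 (by positivity)
  have hr : 0 < (1 - (2 : ℝ) ^ (-(2 * h)))⁻¹ :=
    inv_pos.2 (sub_pos.2 (rpow_lt_one_of_one_lt_of_neg one_lt_two (by linarith)))
  have hρ : 0 < (1 - (2 : ℝ) ^ (2 * h - 2))⁻¹ :=
    inv_pos.2 (sub_pos.2 (rpow_lt_one_of_one_lt_of_neg one_lt_two (by linarith)))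
  refine ⟨4 * 2 ^ (2 * 4) * C₀ ^ 2 * B * (1 - 2 ^ (-(2 * h)))⁻¹ +
    2 ^ (4 * 4) * C₀ ^ 2 * B * (1 - 2 ^ (2 * h - 2))⁻¹, by positivity, fun s t ↦ ?_⟩
  have hscale : ∀ j : ℕ, |(2 : ℝ) ^ j * t - 2 ^ j * s| = 2 ^ j * |s - t| := fun j ↦ by
    rw [← mul_sub, abs_mul, abs_of_pos (by positivity), abs_sub_comm]
  simp_rw [tsum_mul_left]
  refine tsum_two_rpow_neg_mul_le (by linarith) (by linarith) (abs_nonneg _) (by positivity)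
    (fun j ↦ tsum_nonneg fun k ↦ sq_nonneg _)
    (fun j ↦ tsum_sq_sub_translate_le (by norm_num) hψ₀ _ _) fun j hj ↦ ?_
  rw [← hscale, sq_abs]
  exact tsum_sq_sub_translate_le_sq (by norm_num) (hψ.differentiable one_ne_zero) hψ₁
    (by rwa [hscale])
end

section
/- Let (ξ_{j,k})_{(j,k)∈ℕ×ℤ} be independent standard Gaussian N(0,1) random variables. Almost surely, for every t ∈ ℝ, limsup_{j→∞} |ξ_{j,k_j(t)}| ≥ 2^{−3/2}·√π. -/
/-!
If `|ξ (j, k_j(t))| < c` for all `j ≥ J`, then for every `n` some chain of `n + 1` nested dyadic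
intervals below `(J, k_J(t))` carries values in `(-c, c)`. There are `2 ^ n` such chains, each of
probability `q ^ (n + 1)` with `q = P(|N(0,1)| < c) < 2c/√(2π) = 1/2`, so the union bound
`2 ^ n q ^ (n + 1) → 0` makes this event null; a countable union over `(J, k)` finishes the proof.
-/

open MeasureTheory ProbabilityTheory Filter

theorem gaussianReal_Ioo_lt {c : ℝ} (hc : 0 < c) :
    gaussianReal 0 1 (Set.Ioo (-c) c) < ENNReal.ofReal (2 * c / √(2 * Real.pi)) := by
  set M : ℝ := (√(2 * Real.pi))⁻¹
  have hpdf : ∀ x, gaussianPDFReal 0 1 x = M * Real.exp (-x ^ 2 / 2) := fun x => by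
    simp [gaussianPDFReal, M]
  have hle : ∀ x, gaussianPDFReal 0 1 x ≤ M := fun x => by
    rw [hpdf]
    exact mul_le_of_le_one_right (by positivity) (Real.exp_le_one_iff.mpr (by nlinarith))
  have hlt : gaussianPDFReal 0 1 c < M := by
    rw [hpdf]
    exact mul_lt_of_lt_one_right (by positivity) (Real.exp_lt_one_iff.mpr (by nlinarith))
  have hcont : Continuous (gaussianPDFReal 0 1) := by
    rw [gaussianPDFReal_def]; fun_prop
  have hint : ∫ x in Set.Ioo (-c) c, gaussianPDFReal 0 1 x < ∫ _ in (-c)..c, M := by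
    rw [← integral_Ioc_eq_integral_Ioo, ← intervalIntegral.integral_of_le (by linarith)]
    exact intervalIntegral.integral_lt_integral_of_continuousOn_of_le_of_exists_lt (by linarith)
      hcont.continuousOn continuousOn_const (fun x _ => hle x) ⟨c, by simp [hc.le], hlt⟩
  rw [gaussianReal_apply_eq_integral 0 one_ne_zero]
  refine (ENNReal.ofReal_lt_ofReal_iff (by positivity)).mpr (hint.trans_eq ?_)
  simp only [intervalIntegral.integral_const, smul_eq_mul, M]
  ring

theorem two_rpow_neg_three_halves_mul_sqrt_pi :
    (2 : ℝ) ^ (-(3 : ℝ) / 2) * √Real.pi = √(2 * Real.pi) / 4 := by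
  have h32 : (2 : ℝ) ^ ((3 : ℝ) / 2) = 2 * √2 := by
    rw [show (3 : ℝ) / 2 = 1 + 1 / 2 by norm_num, Real.rpow_add two_pos, Real.rpow_one,
      ← Real.sqrt_eq_rpow]
  have h2 : √2 * √2 = 2 := Real.mul_self_sqrt zero_le_two
  rw [neg_div, Real.rpow_neg zero_le_two, h32, Real.sqrt_mul zero_le_two]
  field_simp
  nlinarith

theorem Int.floor_two_pow_add_mul_ediv_two_pow (t : ℝ) (j d : ℕ) :
    ⌊(2 : ℝ) ^ (j + d) * t⌋ / 2 ^ d = ⌊(2 : ℝ) ^ j * t⌋ := by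
  have := Int.floor_div_natCast ((2 : ℝ) ^ (j + d) * t) (2 ^ d)
  push_cast at this
  rw [← this, pow_add, mul_right_comm, mul_div_cancel_right₀ _ (by positivity)]

theorem ProbabilityTheory.iIndepFun.measure_biInter_preimage_le_pow {Ω ι β : Type*}
    [MeasurableSpace Ω] [MeasurableSpace β] {P : Measure Ω} {X : ι → Ω → β} (hX : iIndepFun X P)
    {A : Set β} (hA : MeasurableSet A) {q : ENNReal} (hq : ∀ i, P (X i ⁻¹' A) ≤ q) (s : Finset ι) :
    P (⋂ i ∈ s, X i ⁻¹' A) ≤ q ^ s.card := by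
  rw [hX.measure_inter_preimage_eq_mul s (sets := fun _ => A) (fun _ _ => hA)]
  exact Finset.prod_le_pow_card _ _ _ fun i _ => hq i

section DyadicPaths

variable {Ω β : Type*} {ξ : ℕ × ℤ → Ω → β} {A : Set β}

/-- Some chain of nested dyadic intervals from `(J, k)` down to level `J + n` carries values of `ξ`
in `A`: the `m` are the descendants of `(J, k)` at level `J + n`, and `(J + i, m / 2 ^ (n - i))`
is the ancestor of `(J + n, m)` at level `J + i`. -/
def dyadicPathEvent (ξ : ℕ × ℤ → Ω → β) (A : Set β) (J : ℕ) (k : ℤ) (n : ℕ) : Set Ω :=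
  ⋃ m ∈ Finset.Ico (2 ^ n * k) (2 ^ n * k + 2 ^ n),
    ⋂ i ∈ Finset.range (n + 1), ξ (J + i, m / 2 ^ (n - i)) ⁻¹' A

theorem mem_dyadicPathEvent_of_forall_ge {ω : Ω} {t : ℝ} {J : ℕ}
    (h : ∀ j ≥ J, ξ (j, ⌊(2 : ℝ) ^ j * t⌋) ω ∈ A) (n : ℕ) :
    ω ∈ dyadicPathEvent ξ A J ⌊(2 : ℝ) ^ J * t⌋ n := by
  set m := ⌊(2 : ℝ) ^ (J + n) * t⌋
  have hm : m / 2 ^ n = ⌊(2 : ℝ) ^ J * t⌋ := Int.floor_two_pow_add_mul_ediv_two_pow t J n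
  have hmem : m ∈ Finset.Ico (2 ^ n * ⌊(2 : ℝ) ^ J * t⌋) (2 ^ n * ⌊(2 : ℝ) ^ J * t⌋ + 2 ^ n) := by
    have h2n : (0 : ℤ) < 2 ^ n := by positivity
    rw [Finset.mem_Ico, ← hm]
    constructor
    · exact Int.mul_ediv_self_le h2n.ne'
    · linarith [Int.lt_mul_ediv_self_add h2n (x := m)]
  refine Set.mem_biUnion hmem (Set.mem_iInter₂.mpr fun i hi => ?_)
  have hi : i ≤ n := Nat.lt_succ_iff.mp (Finset.mem_range.mp hi)
  have hanc : m / 2 ^ (n - i) = ⌊(2 : ℝ) ^ (J + i) * t⌋ := by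
    rw [← Int.floor_two_pow_add_mul_ediv_two_pow t (J + i) (n - i), Nat.add_assoc,
      Nat.add_sub_cancel' hi]
  rw [Set.mem_preimage, hanc]
  exact h (J + i) (Nat.le_add_right J i)

variable [MeasurableSpace Ω] [MeasurableSpace β] {P : Measure Ω} {q : ENNReal}

theorem measure_dyadicPathEvent_le (hξ : iIndepFun ξ P) (hA : MeasurableSet A)
    (hq : ∀ p, P (ξ p ⁻¹' A) ≤ q) (J : ℕ) (k : ℤ) (n : ℕ) :
    P (dyadicPathEvent ξ A J k n) ≤ 2 ^ n * q ^ (n + 1) := by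
  have hpath : ∀ m : ℤ, P (⋂ i ∈ Finset.range (n + 1), ξ (J + i, m / 2 ^ (n - i)) ⁻¹' A)
      ≤ q ^ (n + 1) := fun m => by
    have hinj : Function.Injective fun i : ℕ => (J + i, m / 2 ^ (n - i)) :=
      fun i i' h => by simpa using congrArg Prod.fst h
    simpa using (hξ.precomp hinj).measure_biInter_preimage_le_pow hA (fun _ => hq _)
      (Finset.range (n + 1))
  calc P (dyadicPathEvent ξ A J k n)
      ≤ ∑ m ∈ Finset.Ico (2 ^ n * k) (2 ^ n * k + 2 ^ n),
          P (⋂ i ∈ Finset.range (n + 1), ξ (J + i, m / 2 ^ (n - i)) ⁻¹' A) :=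
        measure_biUnion_finset_le _ _
    _ ≤ ∑ _m ∈ Finset.Ico (2 ^ n * k) (2 ^ n * k + 2 ^ n), q ^ (n + 1) :=
        Finset.sum_le_sum fun m _ => hpath m
    _ = 2 ^ n * q ^ (n + 1) := by
        rw [Finset.sum_const, Int.card_Ico, add_sub_cancel_left, nsmul_eq_mul]
        norm_cast

theorem measure_iInter_dyadicPathEvent (hξ : iIndepFun ξ P) (hA : MeasurableSet A)
    (hq : ∀ p, P (ξ p ⁻¹' A) ≤ q) (h2q : 2 * q < 1) (J : ℕ) (k : ℤ) :
    P (⋂ n, dyadicPathEvent ξ A J k n) = 0 := by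
  have hq_top : q ≠ ⊤ := by
    rintro rfl
    simp at h2q
  have hlim : Tendsto (fun n : ℕ => 2 ^ n * q ^ (n + 1)) atTop (nhds 0) := by
    simpa [pow_succ, mul_pow, mul_comm, mul_assoc] using
      ENNReal.Tendsto.const_mul (ENNReal.tendsto_pow_atTop_nhds_zero_of_lt_one h2q)
        (Or.inr hq_top)
  refine le_zero_iff.mp (ge_of_tendsto' hlim fun n => ?_)
  exact (measure_mono (Set.iInter_subset _ n)).trans (measure_dyadicPathEvent_le hξ hA hq J k n)

theorem ae_forall_frequently_notMem (hξ : iIndepFun ξ P) (hA : MeasurableSet A)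
    (hq : ∀ p, P (ξ p ⁻¹' A) ≤ q) (h2q : 2 * q < 1) :
    ∀ᵐ ω ∂P, ∀ t : ℝ, ∃ᶠ j in atTop, ξ (j, ⌊(2 : ℝ) ^ j * t⌋) ω ∉ A := by
  have hnull : ∀ᵐ ω ∂P, ω ∉ ⋃ (J : ℕ) (k : ℤ), ⋂ n, dyadicPathEvent ξ A J k n :=
    measure_eq_zero_iff_ae_notMem.mp <| measure_iUnion_null fun J =>
      measure_iUnion_null fun k => measure_iInter_dyadicPathEvent hξ hA hq h2q J k
  filter_upwards [hnull] with ω hω t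
  rw [Filter.frequently_atTop]
  by_contra! hstay
  obtain ⟨J, hJ⟩ := hstay
  exact hω (Set.mem_iUnion₂.mpr ⟨J, _, Set.mem_iInter.mpr (mem_dyadicPathEvent_of_forall_ge hJ)⟩)

end DyadicPaths

theorem stmt_10_general {Ω : Type*} [MeasurableSpace Ω] (P : Measure Ω)
    (ξ : ℕ × ℤ → Ω → ℝ)
    (hmeas : ∀ p, Measurable (ξ p))
    (hindep : iIndepFun ξ P)
    (hgauss : ∀ p, Measure.map (ξ p) P = gaussianReal 0 1) :
    ∀ᵐ ω ∂P, ∀ t : ℝ,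
      ENNReal.ofReal ((2 : ℝ) ^ (-(3 : ℝ) / 2) * Real.sqrt Real.pi) ≤
        Filter.limsup (fun j : ℕ => ENNReal.ofReal |ξ (j, ⌊(2 : ℝ) ^ j * t⌋) ω|) Filter.atTop := by
  rw [two_rpow_neg_three_halves_mul_sqrt_pi]
  set c := √(2 * Real.pi) / 4
  have hc : 0 < c := by positivity
  have hq : ∀ p, P (ξ p ⁻¹' Set.Ioo (-c) c) ≤ gaussianReal 0 1 (Set.Ioo (-c) c) := fun p => by
    rw [← hgauss p, Measure.map_apply (hmeas p) measurableSet_Ioo]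
  have h2q : 2 * gaussianReal 0 1 (Set.Ioo (-c) c) < 1 := by
    have hhalf : ENNReal.ofReal (2 * c / √(2 * Real.pi)) = 2⁻¹ := by
      rw [show 2 * c / √(2 * Real.pi) = 2⁻¹ by field_simp; ring, ENNReal.ofReal_inv_of_pos two_pos]
      simp
    calc 2 * gaussianReal 0 1 (Set.Ioo (-c) c) < 2 * 2⁻¹ := by
          gcongr
          · simp
          · exact hhalf ▸ gaussianReal_Ioo_lt hc
      _ = 1 := ENNReal.mul_inv_cancel two_ne_zero ENNReal.ofNat_ne_top
  filter_upwards [ae_forall_frequently_notMem hindep measurableSet_Ioo hq h2q] with ω hω t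
  refine le_limsup_of_frequently_le ((hω t).mono fun j hj => ENNReal.ofReal_le_ofReal ?_)
  rwa [Set.mem_Ioo, ← abs_lt, not_lt] at hj

theorem stmt_10 {Ω : Type*} [MeasurableSpace Ω] (P : Measure Ω) [IsProbabilityMeasure P]
    (ξ : ℕ × ℤ → Ω → ℝ)
    (hmeas : ∀ p, Measurable (ξ p))
    (hindep : iIndepFun ξ P)
    (hgauss : ∀ p, Measure.map (ξ p) P = gaussianReal 0 1) :
    ∀ᵐ ω ∂P, ∀ t : ℝ,
      ENNReal.ofReal ((2 : ℝ) ^ (-(3 : ℝ) / 2) * Real.sqrt Real.pi) ≤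
        Filter.limsup (fun j : ℕ => ENNReal.ofReal |ξ (j, ⌊(2 : ℝ) ^ j * t⌋) ω|) Filter.atTop :=
  stmt_10_general P ξ hmeas hindep hgauss
end

section
/- Let (ξ_{j,k})_{(j,k)∈ℕ×ℤ} be independent standard Gaussian N(0,1) random variables. Almost surely, for every nonempty open interval I of ℝ there exists t ∈ I such that limsup_{j→∞} |ξ_{j,k_j(t)}| / √j > 0. -/
/-!
Fix a dyadic interval of level `L`. Its `2 ^ i` dyadic subintervals of level `L + i` carry
independent standard Gaussians, so the probability that none of them reaches `√(L + i)` is at most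
`exp (-2 ^ i * P(N ≥ √(L + i)))`, which tends to `0` as `i → ∞` because `log 2 > 1 / 2`. Hence,
almost surely, every dyadic interval contains dyadic subintervals of arbitrarily fine levels `J`
on which `ξ_J ≥ √J`. Then for each `m` the open set of points `t` that lie in such a subinterval of
some level `J ≥ m` is dense, and by Baire's theorem the points `t` lying in infinitely many of them
are dense as well; for those, `|ξ_{j, k_j(t)}| / √j ≥ 1` infinitely often.
-/

open MeasureTheory ProbabilityTheory Filter Set Real Topology
open scoped ENNReal

namespace DyadicGaussian

/-- Indices at level `L + i` of the dyadic intervals of length `2⁻ᴸ⁻ⁱ` that tile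
`[k 2⁻ᴸ, (k + 1) 2⁻ᴸ)`. -/
noncomputable def dyadicChildren (k : ℤ) (i : ℕ) : Finset ℤ :=
  Finset.Ico (k * 2 ^ i) ((k + 1) * 2 ^ i)

lemma card_dyadicChildren (k : ℤ) (i : ℕ) : (dyadicChildren k i).card = 2 ^ i := by
  simp only [dyadicChildren, Int.card_Ico, add_mul, one_mul, add_sub_cancel_left]
  exact_mod_cast Int.toNat_natCast (2 ^ i)

lemma dyadicChildren_bounds {L i : ℕ} {k k' : ℤ} (hk' : k' ∈ dyadicChildren k i) :
    (k : ℝ) / 2 ^ L ≤ k' / 2 ^ (L + i) ∧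
      ((k' : ℝ) + 1) / 2 ^ (L + i) ≤ (k + 1) / 2 ^ L := by
  obtain ⟨hlo, hhi⟩ := Finset.mem_Ico.1 hk'
  have hlo' : (k : ℝ) * 2 ^ i ≤ k' := by exact_mod_cast hlo
  have hhi' : (k' : ℝ) + 1 ≤ (k + 1) * 2 ^ i := by exact_mod_cast hhi
  rw [pow_add]
  constructor
  · rw [div_le_div_iff₀ (by positivity) (by positivity)]
    nlinarith [pow_pos (two_pos : (0 : ℝ) < 2) L]
  · rw [div_le_div_iff₀ (by positivity) (by positivity)]
    nlinarith [pow_pos (two_pos : (0 : ℝ) < 2) L]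

def LargeInEveryDyadic (g : ℕ × ℤ → ℝ) : Prop :=
  ∀ (L : ℕ) (k : ℤ) (m : ℕ), ∃ i ≥ m, ∃ k' ∈ dyadicChildren k i,
    √((L + i : ℕ) : ℝ) ≤ g (L + i, k')

section Deterministic

variable {g : ℕ × ℤ → ℝ}

lemma floor_mul_eq_of_mem_Ico {c t : ℝ} (hc : 0 < c) {k : ℤ}
    (ht : t ∈ Ico (k / c) ((k + 1) / c)) : ⌊c * t⌋ = k := by
  rw [Int.floor_eq_iff]
  exact ⟨(div_le_iff₀' hc).1 ht.1, (lt_div_iff₀' hc).1 ht.2⟩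

def largeSet (g : ℕ × ℤ → ℝ) (J : ℕ) : Set ℝ :=
  {t | √(J : ℝ) ≤ g (J, ⌊(2 : ℝ) ^ J * t⌋)}

lemma Ioo_subset_interior_largeSet {J : ℕ} {k : ℤ} (h : √(J : ℝ) ≤ g (J, k)) :
    Ioo (k / 2 ^ J : ℝ) ((k + 1) / 2 ^ J) ⊆ interior (largeSet g J) :=
  interior_maximal (fun t ht => by
    show √(J : ℝ) ≤ g (J, ⌊(2 : ℝ) ^ J * t⌋)
    rwa [floor_mul_eq_of_mem_Ico (by positivity) (Ioo_subset_Ico_self ht)]) isOpen_Ioo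

lemma exists_dyadic_between {a b : ℝ} (hab : a < b) :
    ∃ (L : ℕ) (k : ℤ), a < k / 2 ^ L ∧ (k + 1) / 2 ^ L < b := by
  obtain ⟨L, hL⟩ := pow_unbounded_of_one_lt (2 / (b - a)) one_lt_two
  have h2L : (0 : ℝ) < 2 ^ L := by positivity
  have hgap : 2 < (b - a) * 2 ^ L := by rwa [div_lt_iff₀' (by linarith)] at hL
  refine ⟨L, ⌊2 ^ L * a⌋ + 1, ?_, ?_⟩
  · rw [lt_div_iff₀ h2L]
    push_cast
    linarith [Int.lt_floor_add_one ((2 : ℝ) ^ L * a)]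
  · rw [div_lt_iff₀ h2L]
    push_cast
    linarith [Int.floor_le ((2 : ℝ) ^ L * a)]

lemma LargeInEveryDyadic.dense (hg : LargeInEveryDyadic g) (m : ℕ) :
    Dense (⋃ J ≥ m, interior (largeSet g J)) := by
  rw [dense_iff_exists_between]
  intro a b hab
  obtain ⟨L, k, ha, hb⟩ := exists_dyadic_between hab
  obtain ⟨i, hi, k', hk', hlarge⟩ := hg L k m
  obtain ⟨hlo, hhi⟩ := dyadicChildren_bounds (L := L) hk'
  have h2 : (0 : ℝ) < 2 ^ (L + i) := by positivity
  have hmid : ((k' : ℝ) + 1 / 2) / 2 ^ (L + i) ∈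
      Ioo ((k' : ℝ) / 2 ^ (L + i)) ((k' + 1) / 2 ^ (L + i)) :=
    ⟨by gcongr; linarith, by gcongr; linarith⟩
  exact ⟨_, mem_iUnion₂.2 ⟨L + i, by omega, Ioo_subset_interior_largeSet hlarge hmid⟩,
    by linarith [hmid.1], by linarith [hmid.2]⟩

lemma LargeInEveryDyadic.exists_limsup_pos (hg : LargeInEveryDyadic g) {a b : ℝ}
    (hab : a < b) :
    ∃ t ∈ Ioo a b, 0 < limsup (fun j : ℕ =>
      ENNReal.ofReal (|g (j, ⌊(2 : ℝ) ^ j * t⌋)| / √(j : ℝ))) atTop := by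
  have hdense : Dense (⋂ m, ⋃ J ≥ m, interior (largeSet g J)) :=
    dense_iInter_of_isOpen_nat (fun m => isOpen_biUnion fun J _ => isOpen_interior) hg.dense
  obtain ⟨t, ht, hat, htb⟩ := dense_iff_exists_between.1 hdense a b hab
  refine ⟨t, ⟨hat, htb⟩, ?_⟩
  have hfreq : ∃ᶠ j : ℕ in atTop,
      1 ≤ ENNReal.ofReal (|g (j, ⌊(2 : ℝ) ^ j * t⌋)| / √(j : ℝ)) := by
    rw [frequently_atTop]
    intro m
    obtain ⟨J, hJ, htJ⟩ := mem_iUnion₂.1 (mem_iInter.1 ht (m + 1))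
    have hJpos : 0 < √(J : ℝ) := Real.sqrt_pos.2 (by exact_mod_cast (show 0 < J by omega))
    refine ⟨J, by omega, ENNReal.one_le_ofReal.2 ((one_le_div hJpos).2 ?_)⟩
    exact (interior_subset htJ : t ∈ largeSet g J).trans (le_abs_self _)
  exact zero_lt_one.trans_le (le_limsup_of_frequently_le hfreq)

end Deterministic

lemma gaussianPDFReal_le_gaussianReal_Ici {r : ℝ} (hr : 0 ≤ r) :
    ENNReal.ofReal (gaussianPDFReal 0 1 (r + 1)) ≤ gaussianReal 0 1 (Ici r) := by
  rw [gaussianReal_apply 0 one_ne_zero]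
  calc ENNReal.ofReal (gaussianPDFReal 0 1 (r + 1))
      = ∫⁻ _ in Icc r (r + 1), ENNReal.ofReal (gaussianPDFReal 0 1 (r + 1)) := by
        simp [Real.volume_Icc]
    _ ≤ ∫⁻ x in Icc r (r + 1), gaussianPDF 0 1 x := by
        refine setLIntegral_mono (measurable_gaussianPDF 0 1) fun x hx => ?_
        refine ENNReal.ofReal_le_ofReal ?_
        simp only [gaussianPDFReal, sub_zero]
        have : x ^ 2 ≤ (r + 1) ^ 2 := pow_le_pow_left₀ (hr.trans hx.1) hx.2 2
        gcongr
    _ ≤ ∫⁻ x in Ici r, gaussianPDF 0 1 x := lintegral_mono_set Icc_subset_Ici_self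

lemma gaussianReal_Iio_le {r : ℝ} (hr : 0 ≤ r) :
    gaussianReal 0 1 (Iio r) ≤ ENNReal.ofReal (exp (-gaussianPDFReal 0 1 (r + 1))) := by
  set p := gaussianPDFReal 0 1 (r + 1)
  rw [← compl_Ici, prob_compl_eq_one_sub measurableSet_Ici]
  calc 1 - gaussianReal 0 1 (Ici r) ≤ 1 - ENNReal.ofReal p :=
        tsub_le_tsub_left (gaussianPDFReal_le_gaussianReal_Ici hr) 1
    _ = ENNReal.ofReal (1 - p) := by
        rw [ENNReal.ofReal_sub _ (gaussianPDFReal_nonneg 0 1 _), ENNReal.ofReal_one]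
    _ ≤ ENNReal.ofReal (exp (-p)) :=
        ENNReal.ofReal_le_ofReal (by linarith [add_one_le_exp (-p)])

lemma tendsto_two_pow_mul_gaussianPDFReal (L : ℕ) :
    Tendsto (fun i : ℕ => 2 ^ i * gaussianPDFReal 0 1 (√((L + i : ℕ) : ℝ) + 1)) atTop atTop := by
  have hρ : 1 < 2 * exp (-(5 / 8)) := by
    have : exp (5 / 8) < 2 := by
      calc exp (5 / 8) < exp (log 2) := exp_lt_exp.2 (by linarith [log_two_gt_d9])
        _ = 2 := exp_log two_pos
    rw [exp_neg, lt_mul_inv_iff₀ (exp_pos _)]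
    linarith
  set C : ℝ := (√(2 * π))⁻¹ * exp (-(5 / 8) * L - 5 / 2)
  have hC : 0 < C := by positivity
  refine tendsto_atTop_mono (fun i => ?_)
    ((tendsto_pow_atTop_atTop_of_one_lt hρ).const_mul_atTop hC)
  set J : ℝ := ((L + i : ℕ) : ℝ)
  have hJ : 0 ≤ J := Nat.cast_nonneg _
  have hsq : (√J + 1) ^ 2 / 2 ≤ 5 / 8 * J + 5 / 2 := by
    nlinarith [sq_sqrt hJ, sq_nonneg (√J - 4)]
  calc C * (2 * exp (-(5 / 8))) ^ i
        = 2 ^ i * ((√(2 * π))⁻¹ * (exp (-(5 / 8) * L - 5 / 2) * exp (-(5 / 8)) ^ i)) := by ring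
    _ = 2 ^ i * ((√(2 * π))⁻¹ * exp (-(5 / 8 * J + 5 / 2))) := by
        rw [← exp_nat_mul, ← exp_add]
        push_cast [J]
        ring_nf
    _ ≤ 2 ^ i * gaussianPDFReal 0 1 (√J + 1) := by
        simp only [gaussianPDFReal, sub_zero, NNReal.coe_one, mul_one]
        gcongr
        linarith

lemma measure_forall_lt_eq_pow {ι Ω : Type*} [MeasurableSpace Ω] {P : Measure Ω}
    {X : ι → Ω → ℝ} {μ : Measure ℝ} (hX : ∀ i, AEMeasurable (X i) P) (hindep : iIndepFun X P)
    (hlaw : ∀ i, P.map (X i) = μ) (F : Finset ι) (r : ℝ) :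
    P {ω | ∀ i ∈ F, X i ω < r} = μ (Iio r) ^ F.card := by
  have hset : {ω | ∀ i ∈ F, X i ω < r} = ⋂ i ∈ F, X i ⁻¹' Iio r := by
    ext; simp
  rw [hset, hindep.meas_biInter fun i _ => ⟨Iio r, measurableSet_Iio, rfl⟩,
    Finset.prod_congr rfl fun i _ => ?_, Finset.prod_const]
  rw [← Measure.map_apply_of_aemeasurable (hX i) measurableSet_Iio, hlaw]

section Probability

variable {Ω : Type*} [MeasurableSpace Ω] {P : Measure Ω} {ξ : ℕ × ℤ → Ω → ℝ}

lemma measure_forall_dyadicChildren_lt_le (hmeas : ∀ p, Measurable (ξ p))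
    (hindep : iIndepFun ξ P) (hgauss : ∀ p, P.map (ξ p) = gaussianReal 0 1)
    (L : ℕ) (k : ℤ) (i : ℕ) :
    P {ω | ∀ k' ∈ dyadicChildren k i, ξ (L + i, k') ω < √((L + i : ℕ) : ℝ)} ≤
      ENNReal.ofReal (exp (-(2 ^ i * gaussianPDFReal 0 1 (√((L + i : ℕ) : ℝ) + 1)))) := by
  rw [measure_forall_lt_eq_pow (X := fun k' => ξ (L + i, k'))
    (fun _ => (hmeas _).aemeasurable) (hindep.precomp (Prod.mk_right_injective _))
    (fun _ => hgauss _), card_dyadicChildren]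
  calc _ ≤ ENNReal.ofReal (exp (-gaussianPDFReal 0 1 (√((L + i : ℕ) : ℝ) + 1))) ^ 2 ^ i :=
        pow_le_pow_left' (gaussianReal_Iio_le (sqrt_nonneg _)) _
    _ = _ := by
        rw [← ENNReal.ofReal_pow (exp_nonneg _), ← exp_nat_mul]
        push_cast
        ring_nf

lemma ae_largeInEveryDyadic (hmeas : ∀ p, Measurable (ξ p))
    (hindep : iIndepFun ξ P) (hgauss : ∀ p, P.map (ξ p) = gaussianReal 0 1) :
    ∀ᵐ ω ∂P, LargeInEveryDyadic (fun p => ξ p ω) := by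
  simp only [LargeInEveryDyadic, ae_all_iff]
  intro L k m
  rw [ae_iff]
  have htend : Tendsto (fun i : ℕ => ENNReal.ofReal
      (exp (-(2 ^ i * gaussianPDFReal 0 1 (√((L + i : ℕ) : ℝ) + 1))))) atTop (𝓝 0) := by
    simpa using ENNReal.tendsto_ofReal
      (tendsto_exp_neg_atTop_nhds_zero.comp (tendsto_two_pow_mul_gaussianPDFReal L))
  refine nonpos_iff_eq_zero.1 (ge_of_tendsto htend (eventually_atTop.2 ⟨m, fun i hi => ?_⟩))
  have hsub :
      {ω | ¬∃ i ≥ m, ∃ k' ∈ dyadicChildren k i, √((L + i : ℕ) : ℝ) ≤ ξ (L + i, k') ω} ⊆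
      {ω | ∀ k' ∈ dyadicChildren k i, ξ (L + i, k') ω < √((L + i : ℕ) : ℝ)} :=
    fun ω hω k' hk' => not_le.1 fun hlarge => hω ⟨i, hi, k', hk', hlarge⟩
  exact (measure_mono hsub).trans (measure_forall_dyadicChildren_lt_le hmeas hindep hgauss L k i)

end Probability

end DyadicGaussian

theorem stmt_12_general {Ω : Type*} [MeasurableSpace Ω] (P : Measure Ω)
    (ξ : ℕ × ℤ → Ω → ℝ)
    (hmeas : ∀ p, Measurable (ξ p))
    (hindep : iIndepFun ξ P)
    (hgauss : ∀ p, Measure.map (ξ p) P = gaussianReal 0 1) :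
    ∀ᵐ ω ∂P, ∀ a b : ℝ, a < b → ∃ t ∈ Set.Ioo a b,
      0 < Filter.limsup (fun j : ℕ =>
        ENNReal.ofReal (|ξ (j, ⌊(2 : ℝ) ^ j * t⌋) ω| / Real.sqrt (j : ℝ)))
        Filter.atTop := by
  filter_upwards [DyadicGaussian.ae_largeInEveryDyadic hmeas hindep hgauss] with ω hω a b hab
  exact hω.exists_limsup_pos hab

theorem stmt_12 {Ω : Type*} [MeasurableSpace Ω] (P : Measure Ω) [IsProbabilityMeasure P]
    (ξ : ℕ × ℤ → Ω → ℝ)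
    (hmeas : ∀ p, Measurable (ξ p))
    (hindep : iIndepFun ξ P)
    (hgauss : ∀ p, Measure.map (ξ p) P = gaussianReal 0 1) :
    ∀ᵐ ω ∂P, ∀ a b : ℝ, a < b → ∃ t ∈ Set.Ioo a b,
      0 < Filter.limsup (fun j : ℕ =>
        ENNReal.ofReal (|ξ (j, ⌊(2 : ℝ) ^ j * t⌋) ω| / Real.sqrt (j : ℝ)))
        Filter.atTop :=
  stmt_12_general P ξ hmeas hindep hgauss
end
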